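/- arXiv:1308.6566 — 3 statements merged into one kernel-verified Lean document; each statement's English description precedes it below -/
import Mathlib

section
/- For every natural number ℓ, every finite collection of points x₁,…,xₙ ∈ S², and all complex numbers c₁,…,cₙ, the double sum ∑_{i=1}^{n} ∑_{j=1}^{n} c_i · conj(c_j) · P_ℓ(x_i · x_j) is a nonnegative real number. (Positive semidefiniteness of each Legendre polynomial evaluated at dot products of unit vectors, the basis for Class 1 isotropic reproducing kernels.) -/
open MeasureTheory Metric Finset
open scoped ComplexOrder

/-- The `ℓ`-th Legendre polynomial (Rodrigues' formula), normalized so that `P_ℓ(1) = 1`. -/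
noncomputable def legendreP (ℓ : ℕ) : Polynomial ℝ :=
  ((1 : ℝ) / (2 ^ ℓ * ℓ.factorial)) • Polynomial.derivative^[ℓ] ((Polynomial.X ^ 2 - 1) ^ ℓ)

/-- The dot product of two points of the unit sphere `S² ⊂ ℝ³`. -/
noncomputable def sphereDot (x y : sphere (0 : EuclideanSpace ℝ (Fin 3)) 1) : ℝ :=
  inner ℝ (x : EuclideanSpace ℝ (Fin 3)) (y : EuclideanSpace ℝ (Fin 3))

open scoped Nat ComplexConjugate RealInnerProductSpace

/-!
Via the Hopf map, a point `x ∈ S²` lifts to a unit spinor `(a, b) ∈ ℂ²` with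
`x₂ = |a|² - |b|²` and `x₀ + i x₁ = 2 a b̄`. Attach to it the binary form
`h_x = (a s + b t)^ℓ (-b̄ s + ā t)^ℓ` of degree `2ℓ`. For the Fischer inner product
`⟨f, g⟩ = ∑ₘ m! f̄ₘ gₘ` on `ℂ[s, t]`, multiplication by a linear form is adjoint to the
corresponding directional derivative, so `⟨h_x, h_y⟩` is obtained by differentiating `2ℓ` times:
it equals `ℓ!² ∑ₖ C(ℓ,k)² (|⟨u, u'⟩|²)^k (-|det(u, u')|²)^(ℓ-k)` for the spinors `u, u'` of
`x, y`. Here `|⟨u, u'⟩|² = (1 + x·y)/2` and `|det(u, u')|² = (1 - x·y)/2`, while Leibniz' rule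
in Rodrigues' formula gives `P_ℓ(t) = ∑ₖ C(ℓ,k)² ((t+1)/2)^k ((t-1)/2)^(ℓ-k)`. Hence
`⟨h_x, h_y⟩ = ℓ!² P_ℓ(x·y)`, and `(P_ℓ(xᵢ·xⱼ))` is a positive multiple of a Gram matrix.
-/

theorem Nat.choose_mul_descFactorial_mul_descFactorial {n i j : ℕ} (h : i + j = n) :
    n.choose i * n.descFactorial i * n.descFactorial j = n.choose i ^ 2 * n ! := by
  rw [Nat.descFactorial_eq_factorial_mul_choose, Nat.descFactorial_eq_factorial_mul_choose,
    ← Nat.choose_symm_of_eq_add h.symm,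
    ← Nat.choose_mul_factorial_mul_factorial (show i ≤ n by omega), show n - i = j by omega]
  ring

namespace Derivation

variable {R A : Type*} [CommSemiring R] [CommSemiring A] [Algebra R A]
  (D : Derivation R A A)

theorem iterate_leibniz (n : ℕ) (a b : A) :
    D^[n] (a * b) = ∑ ij ∈ antidiagonal n, n.choose ij.1 • (D^[ij.1] a * D^[ij.2] b) := by
  induction n with
  | zero => simp
  | succ n ih =>
    rw [sum_antidiagonal_choose_succ_nsmul (fun i j => D^[i] a * D^[j] b) n]
    simp only [Function.iterate_succ_apply', ih, map_sum, map_nsmul, leibniz, smul_eq_mul,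
      nsmul_add, sum_add_distrib]
    congr 1
    refine sum_congr rfl fun ⟨i, j⟩ hij => ?_
    rw [n.choose_symm_of_eq_add (mem_antidiagonal.1 hij).symm]
    ring

theorem iterate_pow {x : A} {c : R} (hx : D x = algebraMap R A c) (n k : ℕ) :
    D^[k] (x ^ n) = algebraMap R A (n.descFactorial k * c ^ k) * x ^ (n - k) := by
  induction k with
  | zero => simp
  | succ k ih =>
    rw [Function.iterate_succ_apply', ih, ← Algebra.smul_def, map_smul, Algebra.smul_def,
      leibniz_pow, hx, Nat.descFactorial_succ, Nat.sub_sub]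
    simp only [nsmul_eq_mul, smul_eq_mul, Nat.cast_mul, map_mul, map_pow, _root_.map_natCast]
    ring

theorem iterate_pow_mul_pow {x y : A} {c d : R} (hx : D x = algebraMap R A c)
    (hy : D y = algebraMap R A d) (a b : ℕ) :
    D^[a + b] (x ^ a * y ^ b) = algebraMap R A ((a + b)! * c ^ a * d ^ b) := by
  rw [iterate_leibniz, sum_eq_single (a, b)]
  · simp only [iterate_pow D hx, iterate_pow D hy, Nat.descFactorial_self, Nat.sub_self, pow_zero,
      mul_one, nsmul_eq_mul, ← Nat.add_choose_mul_factorial_mul_factorial, Nat.cast_mul, map_mul,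
      _root_.map_natCast]
    rw [Nat.choose_symm_add]
    ring
  · rintro ⟨i, j⟩ hij hne
    have hij : i + j = a + b := HasAntidiagonal.mem_antidiagonal.1 hij
    have hia : i ≠ a := fun hia => hne (Prod.ext hia (by simp only; omega))
    rcases lt_or_gt_of_ne hia with hi | hi
    · rw [iterate_pow D hy, Nat.descFactorial_eq_zero_iff_lt.2 (by omega)]
      simp
    · rw [iterate_pow D hx, Nat.descFactorial_eq_zero_iff_lt.2 hi]
      simp
  · simp

theorem iterate_pow_mul_pow_self {x y : A} {c d : R} (hx : D x = algebraMap R A c)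
    (hy : D y = algebraMap R A d) (n : ℕ) :
    D^[n] (x ^ n * y ^ n) = ∑ ij ∈ antidiagonal n,
      algebraMap R A (n.choose ij.1 ^ 2 * n ! * c ^ ij.1 * d ^ ij.2) * (x ^ ij.2 * y ^ ij.1) := by
  rw [D.iterate_leibniz]
  refine sum_congr rfl fun ⟨i, j⟩ hij => ?_
  have hij : i + j = n := HasAntidiagonal.mem_antidiagonal.1 hij
  rw [D.iterate_pow hx, D.iterate_pow hy, show n - i = j by omega, show n - j = i by omega,
    show (n.choose i : R) ^ 2 * n ! = (n.choose i ^ 2 * n ! : ℕ) by push_cast; rfl,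
    ← Nat.choose_mul_descFactorial_mul_descFactorial hij]
  simp only [nsmul_eq_mul, Nat.cast_mul, map_mul, _root_.map_natCast, map_pow]
  ring

end Derivation

open Polynomial in
theorem legendreP_eval (ℓ : ℕ) (t : ℝ) :
    (legendreP ℓ).eval t =
      ∑ ij ∈ antidiagonal ℓ,
        (ℓ.choose ij.1 : ℝ) ^ 2 * ((t + 1) / 2) ^ ij.1 * ((t - 1) / 2) ^ ij.2 := by
  have hD : ∀ a : ℝ, derivative' (X + C a) = algebraMap ℝ ℝ[X] 1 := fun a => by simp
  rw [legendreP, show (X ^ 2 - 1 : ℝ[X]) ^ ℓ = (X + C (-1)) ^ ℓ * (X + C 1) ^ ℓ by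
      rw [← mul_pow]; simp only [C_neg, C_1]; ring,
    show ⇑(derivative (R := ℝ)) = ⇑(derivative' (R := ℝ)) from rfl,
    derivative'.iterate_pow_mul_pow_self (hD _) (hD _), eval_smul, eval_finsetSum, smul_eq_mul,
    mul_sum]
  refine sum_congr rfl fun ⟨i, j⟩ hij => ?_
  obtain rfl : i + j = ℓ := HasAntidiagonal.mem_antidiagonal.1 hij
  simp only [eval_mul, eval_pow, eval_add, eval_X, eval_C, algebraMap_eq, one_pow, mul_one]
  rw [pow_add, div_pow, div_pow]
  field_simp
  ring

namespace MvPolynomial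

variable {σ R : Type*} [Fintype σ] [CommSemiring R]

def fischerWeight (m : σ →₀ ℕ) : ℕ := ∏ i, (m i)!

theorem fischerWeight_single_add [DecidableEq σ] (i : σ) (m : σ →₀ ℕ) :
    fischerWeight (Finsupp.single i 1 + m) = (m i + 1) * fischerWeight m := by
  rw [fischerWeight, fischerWeight, Fintype.prod_eq_mul_prod_compl i,
    Fintype.prod_eq_mul_prod_compl i (fun j => (m j)!), ← mul_assoc]
  congr 1
  · simp [add_comm 1, Nat.factorial_succ]
  · refine prod_congr rfl fun j hj => ?_
    rw [mem_compl, mem_singleton] at hj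
    simp [Finsupp.single_eq_of_ne hj]

variable (σ R) in
noncomputable def fischerPairing : MvPolynomial σ R →ₗ[R] MvPolynomial σ R →ₗ[R] R :=
  LinearMap.mk₂ R
    (fun f g => (AddMonoidAlgebra.coeff f).sum fun m a => (fischerWeight m : R) * a * coeff m g)
    (fun _ _ _ => by
      rw [AddMonoidAlgebra.coeff_add]
      exact Finsupp.sum_add_index' (by simp) (fun _ _ _ => by ring))
    (fun _ _ _ => by
      rw [AddMonoidAlgebra.coeff_smul, Finsupp.sum_smul_index' (by simp), Finsupp.smul_sum]
      exact sum_congr rfl fun _ _ => by simp only [smul_eq_mul]; ring)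
    (fun _ _ _ => by
      simp only [coeff_add, mul_add]
      exact Finsupp.sum_add)
    (fun _ _ _ => by
      rw [Finsupp.smul_sum]
      exact sum_congr rfl fun _ _ => by simp only [coeff_smul, smul_eq_mul]; ring)

theorem fischerPairing_apply (f g : MvPolynomial σ R) :
    fischerPairing σ R f g = ∑ m ∈ f.support, (fischerWeight m : R) * coeff m f * coeff m g :=
  (LinearMap.mk₂_apply ..).trans sum_def

theorem fischerPairing_monomial (m : σ →₀ ℕ) (a : R) (g : MvPolynomial σ R) :
    fischerPairing σ R (monomial m a) g = fischerWeight m * a * coeff m g :=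
  (LinearMap.mk₂_apply ..).trans (sum_monomial_eq (by simp))

theorem fischerPairing_one (g : MvPolynomial σ R) :
    fischerPairing σ R 1 g = coeff 0 g := by
  rw [← C_1, C_apply, fischerPairing_monomial]
  simp [fischerWeight]

theorem fischerPairing_X_mul (i : σ) (f g : MvPolynomial σ R) :
    fischerPairing σ R (X i * f) g = fischerPairing σ R f (pderiv i g) := by
  classical
  induction f using MvPolynomial.induction_on' with
  | monomial m a =>
    rw [X, monomial_mul, one_mul, fischerPairing_monomial, fischerPairing_monomial,
      fischerWeight_single_add, coeff_pderiv, add_comm m]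
    push_cast
    ring
  | add f₁ f₂ h₁ h₂ => simp only [mul_add, map_add, LinearMap.add_apply, h₁, h₂]

theorem fischerPairing_map_conj_self_nonneg (f : MvPolynomial σ ℂ) :
    0 ≤ fischerPairing σ ℂ (f.map conj) f := by
  rw [fischerPairing_apply]
  refine sum_nonneg fun m _ => ?_
  rw [mul_assoc, coeff_map, Complex.conj_mul']
  positivity

noncomputable def linearForm (v : σ → R) : MvPolynomial σ R := ∑ i, C (v i) * X i

noncomputable def dirDeriv (v : σ → R) : Derivation R (MvPolynomial σ R) (MvPolynomial σ R) :=
  ∑ i, v i • pderiv i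

theorem dirDeriv_apply (v : σ → R) (f : MvPolynomial σ R) :
    dirDeriv v f = ∑ i, v i • pderiv i f := by
  change Derivation.coeFnAddMonoidHom (∑ i, v i • pderiv i) f = _
  simp [map_sum, Finset.sum_apply]

theorem dirDeriv_linearForm (v w : σ → R) : dirDeriv v (linearForm w) = C (v ⬝ᵥ w) := by
  classical
  simp [dirDeriv_apply, linearForm, pderiv_X, Pi.single_apply, dotProduct, smul_eq_C_mul, mul_comm]

theorem map_linearForm {S : Type*} [CommSemiring S] (g : R →+* S) (v : σ → R) :
    (linearForm v).map g = linearForm (g ∘ v) := by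
  simp [linearForm]

theorem fischerPairing_linearForm_mul (v : σ → R) (f g : MvPolynomial σ R) :
    fischerPairing σ R (linearForm v * f) g = fischerPairing σ R f (dirDeriv v g) := by
  simp [linearForm, dirDeriv_apply, sum_mul, C_mul', fischerPairing_X_mul]

theorem fischerPairing_linearForm_pow_mul (v : σ → R) (n : ℕ) (f g : MvPolynomial σ R) :
    fischerPairing σ R (linearForm v ^ n * f) g = fischerPairing σ R f ((dirDeriv v)^[n] g) := by
  induction n generalizing f with
  | zero => simp
  | succ n ih =>
    rw [pow_succ, mul_assoc, ih, fischerPairing_linearForm_mul, Function.iterate_succ_apply']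

theorem fischerPairing_linearForm_pow_mul_pow (p q u v : σ → R) (n : ℕ) :
    fischerPairing σ R (linearForm p ^ n * linearForm q ^ n) (linearForm u ^ n * linearForm v ^ n) =
      ∑ ij ∈ antidiagonal n, n.choose ij.1 ^ 2 * n ! * n ! *
        ((p ⬝ᵥ u) * (q ⬝ᵥ v)) ^ ij.1 * ((p ⬝ᵥ v) * (q ⬝ᵥ u)) ^ ij.2 := by
  rw [← mul_one (linearForm q ^ n), fischerPairing_linearForm_pow_mul,
    fischerPairing_linearForm_pow_mul, fischerPairing_one,
    (dirDeriv p).iterate_pow_mul_pow_self (dirDeriv_linearForm p u) (dirDeriv_linearForm p v)]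
  simp only [← Derivation.coeFn_coe, ← Module.End.coe_pow, map_sum, ← Algebra.smul_def, map_smul]
  simp only [Module.End.coe_pow, Derivation.coeFn_coe, coeff_sum, coeff_smul]
  refine sum_congr rfl fun ⟨i, j⟩ hij => ?_
  obtain rfl : i + j = n := HasAntidiagonal.mem_antidiagonal.1 hij
  rw [add_comm i j, (dirDeriv q).iterate_pow_mul_pow (dirDeriv_linearForm q u)
    (dirDeriv_linearForm q v), algebraMap_eq, coeff_zero_C, smul_eq_mul]
  ring

theorem sum_mul_conj_fischerPairing_nonneg {ι : Type*} (s : Finset ι) (F : ι → MvPolynomial σ ℂ)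
    (c : ι → ℂ) :
    0 ≤ ∑ i ∈ s, ∑ j ∈ s, c i * conj (c j) * fischerPairing σ ℂ ((F i).map conj) (F j) := by
  have h := fischerPairing_map_conj_self_nonneg (∑ j ∈ s, C (conj (c j)) * F j)
  simp only [map_sum, map_mul, map_C, Complex.conj_conj] at h
  simp only [C_mul', map_smul, LinearMap.sum_apply, LinearMap.smul_apply, smul_eq_mul, mul_sum] at h
  rw [sum_comm] at h
  simpa only [mul_assoc, mul_left_comm (conj _)] using h

end MvPolynomial

-- `(a, b)` lies over `x` under the Hopf map `S³ → S²`.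
structure IsSpinor (x : EuclideanSpace ℝ (Fin 3)) (a b : ℂ) : Prop where
  mul_conj_fst : a * conj a = (1 + x 2) / 2
  mul_conj_snd : b * conj b = (1 - x 2) / 2
  two_mul_conj : 2 * (a * conj b) = x 0 + x 1 * Complex.I

theorem EuclideanSpace.inner_eq_fin_three (x y : EuclideanSpace ℝ (Fin 3)) :
    ⟪x, y⟫ = x 0 * y 0 + x 1 * y 1 + x 2 * y 2 := by
  simp [PiLp.inner_apply, Fin.sum_univ_three, mul_comm]

namespace IsSpinor

variable {x y : EuclideanSpace ℝ (Fin 3)} {a b c d : ℂ}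

theorem two_conj_mul (h : IsSpinor x a b) : 2 * (conj a * b) = x 0 - x 1 * Complex.I := by
  simpa [sub_eq_add_neg, map_ofNat] using congrArg conj h.two_mul_conj

theorem inner_mul_conj (hx : IsSpinor x a b) (hy : IsSpinor y c d) :
    (conj a * c + conj b * d) * conj (conj a * c + conj b * d) = (1 + ⟪x, y⟫) / 2 := by
  simp only [map_add, map_mul, Complex.conj_conj, EuclideanSpace.inner_eq_fin_three]
  push_cast
  linear_combination (c * conj c) * hx.mul_conj_fst + (1 + x 2) / 2 * hy.mul_conj_fst
    + (d * conj d) * hx.mul_conj_snd + (1 - x 2) / 2 * hy.mul_conj_snd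
    + (c * conj d) / 2 * hx.two_conj_mul + (x 0 - x 1 * Complex.I) / 4 * hy.two_mul_conj
    + (conj c * d) / 2 * hx.two_mul_conj + (x 0 + x 1 * Complex.I) / 4 * hy.two_conj_mul
    - (x 1 * y 1 / 2) * Complex.I_sq

theorem det_mul_conj (hx : IsSpinor x a b) (hy : IsSpinor y c d) :
    (a * d - b * c) * conj (a * d - b * c) = (1 - ⟪x, y⟫) / 2 := by
  simp only [map_sub, map_mul, EuclideanSpace.inner_eq_fin_three]
  push_cast
  linear_combination (d * conj d) * hx.mul_conj_fst + (1 + x 2) / 2 * hy.mul_conj_snd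
    + (c * conj c) * hx.mul_conj_snd + (1 - x 2) / 2 * hy.mul_conj_fst
    - (conj c * d) / 2 * hx.two_mul_conj - (x 0 + x 1 * Complex.I) / 4 * hy.two_conj_mul
    - (c * conj d) / 2 * hx.two_conj_mul - (x 0 - x 1 * Complex.I) / 4 * hy.two_mul_conj
    + (x 1 * y 1 / 2) * Complex.I_sq

end IsSpinor

theorem exists_isSpinor {x : EuclideanSpace ℝ (Fin 3)} (hx : ‖x‖ = 1) : ∃ a b, IsSpinor x a b := by
  have hsum : x 0 ^ 2 + x 1 ^ 2 + x 2 ^ 2 = 1 := by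
    have := real_inner_self_eq_norm_sq x
    rw [hx, EuclideanSpace.inner_eq_fin_three] at this
    linarith
  by_cases hsouth : x 2 = -1
  · have h0 : x 0 = 0 := by nlinarith
    have h1 : x 1 = 0 := by nlinarith
    exact ⟨0, 1, by simp [hsouth], by simp [hsouth], by simp [h0, h1]⟩
  have hpos : 0 < (1 + x 2) / 2 := by
    have : -1 ≤ x 2 := by nlinarith
    have := lt_of_le_of_ne this (Ne.symm hsouth)
    linarith
  set r : ℂ := Complex.ofReal √((1 + x 2) / 2)
  have hr : r * r = (1 + x 2) / 2 := by
    rw [← Complex.ofReal_mul, Real.mul_self_sqrt hpos.le]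
    push_cast
    ring
  have hr0 : r ≠ 0 := Complex.ofReal_ne_zero.2 (Real.sqrt_pos.2 hpos).ne'
  have hrc : conj r = r := Complex.conj_ofReal _
  refine ⟨r, (x 0 - x 1 * Complex.I) / (2 * r), ⟨?_, ?_, ?_⟩⟩
  · rw [hrc, hr]
  · rw [map_div₀]
    simp only [map_sub, map_mul, map_ofNat, Complex.conj_ofReal, Complex.conj_I, hrc]
    field_simp
    have hsumC := congrArg Complex.ofReal hsum
    push_cast at hsumC
    linear_combination (-x 1 ^ 2 : ℂ) * Complex.I_sq + hsumC + 2 * (x 2 - 1) * hr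
  · rw [map_div₀]
    simp only [map_sub, map_mul, map_ofNat, Complex.conj_ofReal, Complex.conj_I, hrc]
    field_simp
    ring

open MvPolynomial

-- For a spinor `(a, b)` over `x`, the coefficients are degree-`ℓ` spherical harmonics at `x`.
noncomputable def harmonicForm (ℓ : ℕ) (a b : ℂ) : MvPolynomial (Fin 2) ℂ :=
  linearForm ![a, b] ^ ℓ * linearForm ![-conj b, conj a] ^ ℓ

theorem fischerPairing_harmonicForm {x y : EuclideanSpace ℝ (Fin 3)} {a b c d : ℂ}
    (hx : IsSpinor x a b) (hy : IsSpinor y c d) (ℓ : ℕ) :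
    fischerPairing (Fin 2) ℂ ((harmonicForm ℓ a b).map conj) (harmonicForm ℓ c d) =
      ℓ ! * ℓ ! * (((legendreP ℓ).eval ⟪x, y⟫ : ℝ) : ℂ) := by
  have h₁ : (conj ∘ ![a, b]) ⬝ᵥ ![c, d] * ((conj ∘ ![-conj b, conj a]) ⬝ᵥ ![-conj d, conj c]) =
      (⟪x, y⟫ + 1) / 2 := by
    have h := hx.inner_mul_conj hy
    simp only [dotProduct, Fin.sum_univ_two, Function.comp_apply, Matrix.cons_val_zero,
      Matrix.cons_val_one, Matrix.cons_val_fin_one, map_add, map_mul, map_neg, Complex.conj_conj]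
      at h ⊢
    linear_combination h
  have h₂ : (conj ∘ ![a, b]) ⬝ᵥ ![-conj d, conj c] * ((conj ∘ ![-conj b, conj a]) ⬝ᵥ ![c, d]) =
      (⟪x, y⟫ - 1) / 2 := by
    have h := hx.det_mul_conj hy
    simp only [dotProduct, Fin.sum_univ_two, Function.comp_apply, Matrix.cons_val_zero,
      Matrix.cons_val_one, Matrix.cons_val_fin_one, map_sub, map_mul, map_neg, Complex.conj_conj]
      at h ⊢
    linear_combination -h
  simp only [harmonicForm, map_mul, map_pow, map_linearForm]
  rw [fischerPairing_linearForm_pow_mul_pow, h₁, h₂, legendreP_eval]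
  push_cast
  rw [mul_sum]
  exact sum_congr rfl fun _ _ => by ring

/-- Positive semidefiniteness of each Legendre polynomial evaluated at dot products of
unit vectors in `ℝ³`: for points `x₁, …, xₙ ∈ S²` and complex numbers `c₁, …, cₙ`, the sum
`∑ᵢ ∑ⱼ cᵢ conj(cⱼ) P_ℓ(xᵢ · xⱼ)` is a nonnegative real number. -/
theorem legendre_positive_definite (ℓ : ℕ) (n : ℕ)
    (x : Fin n → sphere (0 : EuclideanSpace ℝ (Fin 3)) 1) (c : Fin n → ℂ) :
    0 ≤ ∑ i, ∑ j, c i * (starRingEnd ℂ) (c j) *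
      (((legendreP ℓ).eval (sphereDot (x i) (x j)) : ℝ) : ℂ) := by
  choose a b hab using fun i => exists_isSpinor (mem_sphere_zero_iff_norm.1 (x i).2)
  have hgram := sum_mul_conj_fischerPairing_nonneg univ (fun i => harmonicForm ℓ (a i) (b i)) c
  simp only [fischerPairing_harmonicForm (hab _) (hab _)] at hgram
  refine (mul_nonneg (by positivity : (0 : ℂ) ≤ (ℓ ! * ℓ ! : ℂ)⁻¹) hgram).trans_eq ?_
  simp only [mul_sum, sphereDot]
  refine sum_congr rfl fun i _ => sum_congr rfl fun j _ => ?_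
  field_simp
end

section
/- For each natural number ℓ, ∫_{-1}^{1} √((1−z)/2) · P_ℓ(z) dz equals 4/3 when ℓ = 0, and equals −4/((2ℓ−1)(2ℓ+1)(2ℓ+3)) when ℓ ≥ 1. (Legendre–Fourier coefficients of √((1−z)/2).) -/
/-!
Substituting `x = (1 - z) / 2` turns the integral into `2 ∫₀¹ x^{1/2} R_ℓ(x) dx` with
`R_ℓ(x) = P_ℓ(1 - 2x)`. On polynomials the moments `μ_s(p) = ∫₀¹ x^s p(x) dx` obey the
integration-by-parts rule `μ_s(X^{m+1} p') = p(1) - (s + m + 1) μ_s(X^m p)`. Applied to the Legendre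
equation `((x² - x) R_ℓ')' = ℓ(ℓ+1) R_ℓ`, whose boundary term vanishes at `x = 1`, it gives
`(2ℓ-1)(2ℓ+3) μ_{-1/2}(X R_ℓ) = -μ_{-1/2}(R_ℓ)`. Applied to
`R_{ℓ+1}' = (1 - 2x) R_ℓ' - 2(ℓ+1) R_ℓ`, using `R_ℓ(1) = (-1)^ℓ`, it gives a recurrence solved by
`μ_{-1/2}(R_ℓ) = 2/(2ℓ+1)`.
-/

open Polynomial intervalIntegral MeasureTheory

section Rodrigues

variable {R : Type*} [CommRing R]

variable (R) in
noncomputable def rodrigues (ℓ : ℕ) : R[X] := derivative^[ℓ] ((X ^ 2 - 1) ^ ℓ)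

lemma derivative_X_sq_sub_one : derivative (X ^ 2 - 1 : R[X]) = 2 * X := by
  rw [derivative_sub, derivative_X_sq, derivative_one, sub_zero, map_ofNat]

lemma derivative_X_sq_sub_one_pow_succ (ℓ : ℕ) :
    derivative ((X ^ 2 - 1 : R[X]) ^ (ℓ + 1)) =
      ((2 * (ℓ + 1) : ℕ) : R[X]) * ((X ^ 2 - 1) ^ ℓ * X) := by
  rw [derivative_pow_succ, derivative_X_sq_sub_one, map_add, map_natCast, map_one]
  push_cast
  ring

lemma X_sq_sub_one_mul_derivative_pow (ℓ : ℕ) :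
    (X ^ 2 - 1 : R[X]) * derivative ((X ^ 2 - 1) ^ ℓ) = 2 * (ℓ : R[X]) * X * (X ^ 2 - 1) ^ ℓ := by
  rcases ℓ with _ | ℓ
  · simp
  · rw [derivative_X_sq_sub_one_pow_succ]
    push_cast
    ring

lemma derivative_rodrigues (ℓ : ℕ) :
    derivative (rodrigues R ℓ) = derivative^[ℓ + 1] ((X ^ 2 - 1) ^ ℓ) :=
  (Function.iterate_succ_apply' ..).symm

lemma derivative_rodrigues_succ (ℓ : ℕ) :
    derivative (rodrigues R (ℓ + 1)) =
      2 * ((ℓ : R[X]) + 1) *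
        (X * derivative (rodrigues R ℓ) + ((ℓ : R[X]) + 1) * rodrigues R ℓ) := by
  rw [derivative_rodrigues, Function.iterate_succ_apply, derivative_X_sq_sub_one_pow_succ,
    iterate_derivative_natCast_mul, iterate_derivative_mul_X, derivative_rodrigues, rodrigues]
  simp only [add_tsub_cancel_right, nsmul_eq_mul]
  push_cast
  ring

/-- Differentiate `(X² - 1) u' = 2ℓ X u`, `u = (X² - 1)^ℓ`, `ℓ + 1` times by Leibniz' rule. -/
lemma derivative_X_sq_sub_one_mul_derivative_rodrigues (ℓ : ℕ) :
    derivative ((X ^ 2 - 1) * derivative (rodrigues R ℓ)) =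
      (ℓ : R[X]) * ((ℓ : R[X]) + 1) * rodrigues R ℓ := by
  have h1 := congrArg derivative (X_sq_sub_one_mul_derivative_pow (R := R) ℓ)
  set u : R[X] := (X ^ 2 - 1) ^ ℓ
  have h2 : derivative^[2] u * X ^ 2 - derivative^[2] u + 2 • (derivative u * X) =
      (2 * ℓ) • u + (2 * ℓ) • (derivative u * X) := by
    simp only [derivative_mul, derivative_X_sq_sub_one, derivative_ofNat, derivative_natCast,
      derivative_X, zero_mul, mul_zero, add_zero, mul_one] at h1
    simp only [Function.iterate_succ, Function.iterate_zero, Function.comp_apply, id_eq,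
      nsmul_eq_mul]
    push_cast
    linear_combination h1
  have h3 := congrArg (derivative^[ℓ]) h2
  simp only [iterate_map_add, iterate_derivative_sub, iterate_derivative_smul,
    iterate_derivative_derivative_mul_X_sq, iterate_derivative_derivative_mul_X,
    ← Function.iterate_add_apply] at h3
  rw [derivative_mul, derivative_X_sq_sub_one, derivative_rodrigues,
    ← Function.iterate_succ_apply' derivative, rodrigues]
  rcases ℓ with _ | ℓ
  · simp
  simp only [nsmul_eq_mul, add_tsub_cancel_right] at h3
  push_cast at h3 ⊢
  linear_combination h3

end Rodrigues

lemma legendreP_eq_C_mul_rodrigues (ℓ : ℕ) :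
    legendreP ℓ = C ((1 : ℝ) / (2 ^ ℓ * ℓ.factorial)) * rodrigues ℝ ℓ := by
  rw [legendreP, smul_eq_C_mul, rodrigues]

lemma legendreP_zero : legendreP 0 = 1 := by
  simp [legendreP]

lemma derivative_X_sq_sub_one_mul_derivative_legendreP (ℓ : ℕ) :
    derivative ((X ^ 2 - 1) * derivative (legendreP ℓ)) =
      (ℓ : ℝ[X]) * ((ℓ : ℝ[X]) + 1) * legendreP ℓ := by
  rw [legendreP_eq_C_mul_rodrigues, derivative_C_mul, mul_left_comm, derivative_C_mul,
    derivative_X_sq_sub_one_mul_derivative_rodrigues]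
  ring

lemma derivative_legendreP_succ (ℓ : ℕ) :
    derivative (legendreP (ℓ + 1)) =
      X * derivative (legendreP ℓ) + ((ℓ : ℝ[X]) + 1) * legendreP ℓ := by
  have hc : (1 : ℝ) / (2 ^ ℓ * ℓ.factorial) =
      1 / (2 ^ (ℓ + 1) * (ℓ + 1).factorial) * (2 * ((ℓ : ℝ) + 1)) := by
    rw [Nat.factorial_succ, pow_succ]
    field_simp
    push_cast
    ring
  rw [legendreP_eq_C_mul_rodrigues, legendreP_eq_C_mul_rodrigues, derivative_C_mul,
    derivative_C_mul, derivative_rodrigues_succ, hc]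
  simp only [map_mul, map_ofNat, map_add, map_natCast, map_one]
  ring

/-- At `z = -1` the Legendre equation gives `2 P_ℓ'(-1) = -ℓ(ℓ+1) P_ℓ(-1)`, and the derivative
recurrence then forces `P_{ℓ+1}(-1) = -P_ℓ(-1)`. -/
lemma legendreP_eval_neg_one (ℓ : ℕ) : (legendreP ℓ).eval (-1) = (-1) ^ ℓ := by
  have hode (n : ℕ) :
      2 * (derivative (legendreP n)).eval (-1) = -(n * (n + 1) * (legendreP n).eval (-1)) := by
    have h := congrArg (eval (-1)) (derivative_X_sq_sub_one_mul_derivative_legendreP n)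
    simp only [derivative_mul, derivative_X_sq_sub_one, eval_add, eval_mul, eval_sub, eval_pow,
      eval_X, eval_one, eval_ofNat, eval_natCast] at h
    linear_combination -h
  induction ℓ with
  | zero => simp [legendreP_zero]
  | succ n ih =>
    have hrec := congrArg (eval (-1)) (derivative_legendreP_succ n)
    simp only [eval_add, eval_mul, eval_X, eval_natCast, eval_one] at hrec
    have hode' := hode (n + 1)
    push_cast at hode'
    have key : ((n : ℝ) + 1) * (n + 2) *
        ((legendreP (n + 1)).eval (-1) + (legendreP n).eval (-1)) = 0 := by
      linear_combination hode' - 2 * hrec + hode n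
    have hne : ((n : ℝ) + 1) * (n + 2) ≠ 0 := by positivity
    rw [pow_succ, ← ih]
    linear_combination (mul_eq_zero.mp key).resolve_left hne

noncomputable def shiftedLegendreP (ℓ : ℕ) : ℝ[X] := (legendreP ℓ).comp (1 - 2 * X)

lemma derivative_comp_one_sub_two_mul_X (p : ℝ[X]) :
    derivative (p.comp (1 - 2 * X)) = -2 * (derivative p).comp (1 - 2 * X) := by
  rw [derivative_comp]
  simp

lemma shiftedLegendreP_eval_one (ℓ : ℕ) : (shiftedLegendreP ℓ).eval 1 = (-1) ^ ℓ := by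
  rw [shiftedLegendreP, eval_comp]
  norm_num [legendreP_eval_neg_one]

lemma derivative_shiftedLegendreP_succ (ℓ : ℕ) :
    derivative (shiftedLegendreP (ℓ + 1)) =
      (1 - 2 * X) * derivative (shiftedLegendreP ℓ) -
        2 * ((ℓ : ℝ[X]) + 1) * shiftedLegendreP ℓ := by
  simp only [shiftedLegendreP, derivative_comp_one_sub_two_mul_X, derivative_legendreP_succ,
    add_comp, mul_comp, X_comp, natCast_comp, one_comp]
  ring

lemma derivative_X_sq_sub_X_mul_derivative_shiftedLegendreP (ℓ : ℕ) :
    derivative ((X ^ 2 - X) * derivative (shiftedLegendreP ℓ)) =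
      (ℓ : ℝ[X]) * ((ℓ : ℝ[X]) + 1) * shiftedLegendreP ℓ := by
  have h : 2 * ((X ^ 2 - X) * derivative (shiftedLegendreP ℓ)) =
      -((X ^ 2 - 1) * derivative (legendreP ℓ)).comp (1 - 2 * X) := by
    simp only [shiftedLegendreP, derivative_comp_one_sub_two_mul_X, mul_comp, sub_comp, pow_comp,
      X_comp, one_comp]
    ring
  have h' := congrArg derivative h
  rw [derivative_mul, derivative_ofNat, zero_mul, zero_add, derivative_neg,
    derivative_comp_one_sub_two_mul_X, derivative_X_sq_sub_one_mul_derivative_legendreP] at h'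
  simp only [mul_comp, add_comp, natCast_comp, one_comp] at h'
  apply mul_left_cancel₀ (two_ne_zero : (2 : ℝ[X]) ≠ 0)
  rw [h', shiftedLegendreP]
  ring

noncomputable def moment (s : ℝ) (p : ℝ[X]) : ℝ := ∫ x in (0 : ℝ)..1, x ^ s * p.eval x

lemma intervalIntegrable_rpow_mul_eval {s : ℝ} (hs : -1 < s) (p : ℝ[X]) :
    IntervalIntegrable (fun x : ℝ => x ^ s * p.eval x) volume 0 1 :=
  (intervalIntegrable_rpow' hs).mul_continuousOn p.continuous.continuousOn

lemma moment_add {s : ℝ} (hs : -1 < s) (p q : ℝ[X]) :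
    moment s (p + q) = moment s p + moment s q := by
  simp only [moment, eval_add, mul_add]
  exact integral_add (intervalIntegrable_rpow_mul_eval hs p) (intervalIntegrable_rpow_mul_eval hs q)

lemma moment_sub {s : ℝ} (hs : -1 < s) (p q : ℝ[X]) :
    moment s (p - q) = moment s p - moment s q := by
  simp only [moment, eval_sub, mul_sub]
  exact integral_sub (intervalIntegrable_rpow_mul_eval hs p) (intervalIntegrable_rpow_mul_eval hs q)

lemma moment_C_mul (s a : ℝ) (p : ℝ[X]) : moment s (C a * p) = a * moment s p := by
  simp only [moment, eval_mul, eval_C, mul_left_comm _ a]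
  exact integral_const_mul a _

lemma moment_X_mul {s : ℝ} (hs : s ≠ -1) (p : ℝ[X]) : moment s (X * p) = moment (s + 1) p := by
  refine integral_congr fun x hx => ?_
  have hx0 : 0 ≤ x := by
    rw [Set.uIcc_of_le zero_le_one] at hx
    exact hx.1
  simp only [eval_mul, eval_X]
  rw [Real.rpow_add' hx0 (by contrapose! hs; linarith), Real.rpow_one]
  ring

lemma moment_X_pow {s : ℝ} (hs : -1 < s) (n : ℕ) : moment s (X ^ n) = 1 / (s + n + 1) := by
  induction n generalizing s with
  | zero =>
    simp only [moment, pow_zero, eval_one, mul_one, Nat.cast_zero, add_zero]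
    rw [integral_rpow (Or.inl hs), Real.one_rpow, Real.zero_rpow (by linarith)]
    ring
  | succ n ih =>
    rw [pow_succ', moment_X_mul hs.ne', ih (by linarith)]
    push_cast
    ring_nf

lemma moment_X_pow_succ_mul_derivative {s : ℝ} (hs : -1 < s) (m : ℕ) (p : ℝ[X]) :
    moment s (X ^ (m + 1) * derivative p) = p.eval 1 - (s + m + 1) * moment s (X ^ m * p) := by
  induction p using Polynomial.induction_on' with
  | add p q hp hq =>
    rw [derivative_add, mul_add, moment_add hs, hp, hq, mul_add, moment_add hs, eval_add]
    ring
  | monomial n a =>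
    have hpos : s + m + 1 ≠ 0 := by linarith [m.cast_nonneg (α := ℝ)]
    rw [← C_mul_X_pow_eq_monomial, derivative_C_mul_X_pow, mul_left_comm, ← pow_add,
      mul_left_comm, ← pow_add, moment_C_mul, moment_C_mul, moment_X_pow hs, moment_X_pow hs]
    simp only [eval_mul, eval_C, eval_pow, eval_X, one_pow, mul_one]
    rcases n with _ | n
    · simp only [CharP.cast_eq_zero, mul_zero, zero_mul, add_zero, one_div]
      rw [mul_left_comm, mul_inv_cancel₀ hpos]
      ring
    · have hD : s + m + n + 2 ≠ 0 := by
        linarith [n.cast_nonneg (α := ℝ), m.cast_nonneg (α := ℝ)]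
      simp only [add_tsub_cancel_right]
      push_cast
      rw [show s + (m + 1 + n) + 1 = s + m + n + 2 by ring,
        show s + (m + (n + 1)) + 1 = s + m + n + 2 by ring]
      field_simp
      ring

lemma moment_X_mul_derivative {s : ℝ} (hs : -1 < s) (p : ℝ[X]) :
    moment s (X * derivative p) = p.eval 1 - (s + 1) * moment s p := by
  simpa using moment_X_pow_succ_mul_derivative hs 0 p

lemma moment_X_sq_mul_derivative {s : ℝ} (hs : -1 < s) (p : ℝ[X]) :
    moment s (X ^ 2 * derivative p) = p.eval 1 - (s + 2) * moment s (X * p) := by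
  rw [moment_X_pow_succ_mul_derivative hs 1 p, pow_one]
  ring_nf

lemma mul_moment_X_mul_shiftedLegendreP {s : ℝ} (hs : -1 < s) (ℓ : ℕ) :
    (ℓ * (ℓ + 1) - (s + 1) * (s + 2)) * moment s (X * shiftedLegendreP ℓ) =
      -(s + 1) ^ 2 * moment s (shiftedLegendreP ℓ) := by
  have hode := moment_X_mul_derivative hs ((X ^ 2 - X) * derivative (shiftedLegendreP ℓ))
  rw [derivative_X_sq_sub_X_mul_derivative_shiftedLegendreP, sub_mul, moment_sub hs,
    moment_X_sq_mul_derivative hs, moment_X_mul_derivative hs,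
    show X * ((ℓ : ℝ[X]) * ((ℓ : ℝ[X]) + 1) * shiftedLegendreP ℓ) =
      C ((ℓ : ℝ) * (ℓ + 1)) * (X * shiftedLegendreP ℓ) by
      simp only [map_mul, map_natCast, map_add, map_one]; ring,
    moment_C_mul] at hode
  simp only [eval_mul, eval_sub, eval_pow, eval_X, one_pow, sub_self] at hode
  linear_combination hode

lemma mul_moment_shiftedLegendreP_succ {s : ℝ} (hs : -1 < s) (ℓ : ℕ) :
    (s + 1) * moment s (shiftedLegendreP (ℓ + 1)) =
      (s + 1) * moment s (shiftedLegendreP ℓ) +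
        2 * (ℓ - 1 - s) * moment s (X * shiftedLegendreP ℓ) := by
  have hrec := moment_X_mul_derivative hs (shiftedLegendreP (ℓ + 1))
  rw [derivative_shiftedLegendreP_succ, mul_sub, moment_sub hs,
    show X * ((1 - 2 * X) * derivative (shiftedLegendreP ℓ)) =
      X * derivative (shiftedLegendreP ℓ) - C 2 * (X ^ 2 * derivative (shiftedLegendreP ℓ)) by
      simp only [map_ofNat]; ring,
    show X * (2 * ((ℓ : ℝ[X]) + 1) * shiftedLegendreP ℓ) =
      C (2 * ((ℓ : ℝ) + 1)) * (X * shiftedLegendreP ℓ) by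
      simp only [map_mul, map_natCast, map_add, map_one, map_ofNat]; ring,
    moment_sub hs, moment_C_mul, moment_C_mul, moment_X_sq_mul_derivative hs,
    moment_X_mul_derivative hs, shiftedLegendreP_eval_one, shiftedLegendreP_eval_one,
    pow_succ] at hrec
  linear_combination hrec

lemma two_mul_natCast_sub_one_ne_zero (ℓ : ℕ) : 2 * (ℓ : ℝ) - 1 ≠ 0 := by
  rw [sub_ne_zero]
  norm_cast
  omega

lemma moment_neg_half_X_mul_shiftedLegendreP (ℓ : ℕ) :
    moment (-1 / 2) (X * shiftedLegendreP ℓ) =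
      -moment (-1 / 2) (shiftedLegendreP ℓ) / ((2 * ℓ - 1) * (2 * ℓ + 3)) := by
  have h := mul_moment_X_mul_shiftedLegendreP (s := -1 / 2) (by norm_num) ℓ
  have := two_mul_natCast_sub_one_ne_zero ℓ
  rw [eq_div_iff (by positivity)]
  linear_combination 4 * h

lemma moment_neg_half_shiftedLegendreP (ℓ : ℕ) :
    moment (-1 / 2) (shiftedLegendreP ℓ) = 2 / (2 * ℓ + 1) := by
  induction ℓ with
  | zero =>
    rw [show shiftedLegendreP 0 = X ^ 0 by simp [shiftedLegendreP, legendreP_zero],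
      moment_X_pow (by norm_num)]
    norm_num
  | succ n ih =>
    have h := mul_moment_shiftedLegendreP_succ (s := -1 / 2) (by norm_num) n
    rw [moment_neg_half_X_mul_shiftedLegendreP, ih] at h
    have := two_mul_natCast_sub_one_ne_zero n
    rw [show moment (-1 / 2) (shiftedLegendreP (n + 1)) = 2 / (2 * n + 1) +
        4 * (n - 1 / 2) * (-(2 / (2 * n + 1)) / ((2 * n - 1) * (2 * n + 3))) by
      linear_combination 2 * h]
    field_simp
    push_cast
    ring

lemma integral_sqrt_mul_eval_eq_moment (p : ℝ[X]) :
    ∫ z in (-1 : ℝ)..1, √((1 - z) / 2) * p.eval z = 2 * moment (1 / 2) (p.comp (1 - 2 * X)) := by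
  set f : ℝ → ℝ := fun x => √x * (p.comp (1 - 2 * X)).eval x
  calc ∫ z in (-1 : ℝ)..1, √((1 - z) / 2) * p.eval z
        = ∫ z in (-1 : ℝ)..1, f (1 / 2 - z / 2) := by
        refine integral_congr fun z _ => ?_
        simp only [f, eval_comp, eval_sub, eval_one, eval_mul, eval_ofNat, eval_X]
        ring_nf
    _ = 2 • ∫ x in (1 / 2 - 1 / 2 : ℝ)..1 / 2 - -1 / 2, f x :=
        integral_comp_sub_div f two_ne_zero _
    _ = 2 * moment (1 / 2) (p.comp (1 - 2 * X)) := by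
        norm_num [f, moment, Real.sqrt_eq_rpow]

/-- Legendre–Fourier coefficients of `√((1-z)/2)`:
`∫_{-1}^{1} √((1-z)/2) P_ℓ(z) dz` equals `4/3` for `ℓ = 0`
and `-4/((2ℓ-1)(2ℓ+1)(2ℓ+3))` for `ℓ ≥ 1`. -/
theorem sqrt_legendre_coefficients (ℓ : ℕ) :
    ∫ z in (-1 : ℝ)..1, Real.sqrt ((1 - z) / 2) * (legendreP ℓ).eval z
      = if ℓ = 0 then 4 / 3
        else -4 / ((2 * (ℓ : ℝ) - 1) * (2 * (ℓ : ℝ) + 1) * (2 * (ℓ : ℝ) + 3)) := by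
  rw [integral_sqrt_mul_eval_eq_moment, ← shiftedLegendreP,
    show (1 / 2 : ℝ) = -1 / 2 + 1 by norm_num, ← moment_X_mul (by norm_num),
    moment_neg_half_X_mul_shiftedLegendreP, moment_neg_half_shiftedLegendreP]
  have := two_mul_natCast_sub_one_ne_zero ℓ
  split_ifs with h
  · subst h
    norm_num
  · field_simp
    ring
end

section
/- Fix κ > 0 and define λ_ℓ(κ) = (κ/(2·sinh κ)) · ∫_{-1}^{1} e^{κt} · P_ℓ(t) dt for natural numbers ℓ. Then λ_ℓ(κ) > 0 for every ℓ = 0, 1, 2, …. (Positivity of all von Mises–Fisher eigenvalues.) -/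
/-- The eigenvalues of the von Mises–Fisher kernel:
`λ_ℓ(κ) = (κ/(2 sinh κ)) ∫_{-1}^{1} e^{κt} P_ℓ(t) dt`. -/
noncomputable def vmfEigenvalue (κ : ℝ) (ℓ : ℕ) : ℝ :=
  (κ / (2 * Real.sinh κ)) * ∫ t in (-1 : ℝ)..1, Real.exp (κ * t) * (legendreP ℓ).eval t

open Polynomial Real

theorem Polynomial.eval_iterate_derivative_pow_eq_zero {R : Type*} [CommRing R] {p : R[X]}
    {x : R} (hx : p.eval x = 0) {n k : ℕ} (hk : k < n) :
    (derivative^[k] (p ^ n)).eval x = 0 := by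
  obtain ⟨q, hq⟩ := pow_sub_dvd_iterate_derivative_pow p n k
  rw [hq, eval_mul, eval_pow, hx, zero_pow (Nat.sub_ne_zero_of_lt hk), zero_mul]

theorem integral_exp_mul_derivative_eval (κ : ℝ) {a b : ℝ} {p : ℝ[X]} (ha : p.eval a = 0)
    (hb : p.eval b = 0) :
    ∫ t in a..b, exp (κ * t) * (derivative p).eval t
      = -κ * ∫ t in a..b, exp (κ * t) * p.eval t := by
  have hexp : ∀ t, HasDerivAt (fun t => exp (κ * t)) (κ * exp (κ * t)) t := fun t => by
    simpa [mul_comm] using ((hasDerivAt_id t).const_mul κ).exp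
  rw [intervalIntegral.integral_mul_deriv_eq_deriv_mul (fun t _ => hexp t)
    (fun t _ => p.hasDerivAt t) ((by fun_prop : Continuous _).intervalIntegrable _ _)
    (p.derivative.continuous.intervalIntegrable _ _)]
  simp only [ha, hb, mul_zero, sub_zero, zero_sub, mul_assoc,
    intervalIntegral.integral_const_mul, neg_mul]

theorem integral_exp_mul_iterate_derivative_eval (κ : ℝ) {a b : ℝ} {p : ℝ[X]} {m : ℕ}
    (ha : ∀ k < m, (derivative^[k] p).eval a = 0) (hb : ∀ k < m, (derivative^[k] p).eval b = 0) :
    ∫ t in a..b, exp (κ * t) * (derivative^[m] p).eval t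
      = (-κ) ^ m * ∫ t in a..b, exp (κ * t) * p.eval t := by
  induction m with
  | zero => simp
  | succ m ih =>
    rw [Function.iterate_succ_apply', integral_exp_mul_derivative_eval κ (ha m m.lt_succ_self)
      (hb m m.lt_succ_self), ih (fun k hk => ha k (by omega)) (fun k hk => hb k (by omega)),
      pow_succ]
    ring

theorem integral_exp_mul_legendreP (κ : ℝ) (ℓ : ℕ) :
    ∫ t in (-1 : ℝ)..1, exp (κ * t) * (legendreP ℓ).eval t
      = κ ^ ℓ / (2 ^ ℓ * ℓ.factorial) * ∫ t in (-1 : ℝ)..1, exp (κ * t) * (1 - t ^ 2) ^ ℓ := by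
  have hvanish : ∀ x : ℝ, x ^ 2 = 1 → ∀ k < ℓ,
      (derivative^[k] ((X ^ 2 - 1 : ℝ[X]) ^ ℓ)).eval x = 0 := fun x hx _ hk =>
    eval_iterate_derivative_pow_eq_zero (by simp [hx]) hk
  simp only [legendreP, eval_smul, smul_eq_mul, mul_left_comm (exp _),
    intervalIntegral.integral_const_mul]
  rw [integral_exp_mul_iterate_derivative_eval κ (hvanish (-1) (by norm_num))
    (hvanish 1 (by norm_num)), ← intervalIntegral.integral_const_mul,
    ← intervalIntegral.integral_const_mul, ← intervalIntegral.integral_const_mul]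
  congr 1 with t
  have hsign : (-κ) ^ ℓ * (t ^ 2 - 1) ^ ℓ = κ ^ ℓ * (1 - t ^ 2) ^ ℓ := by
    rw [← mul_pow, ← mul_pow]; ring_nf
  simp only [eval_pow, eval_sub, eval_X, eval_one]
  linear_combination (1 / (2 ^ ℓ * ℓ.factorial) * exp (κ * t)) * hsign

theorem integral_exp_mul_one_sub_sq_pow_pos (κ : ℝ) (ℓ : ℕ) :
    0 < ∫ t in (-1 : ℝ)..1, exp (κ * t) * (1 - t ^ 2) ^ ℓ := by
  refine intervalIntegral.intervalIntegral_pos_of_pos_on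
    ((by fun_prop : Continuous _).intervalIntegrable _ _) (fun t ht => ?_) (by norm_num)
  have : 0 < 1 - t ^ 2 := by nlinarith [ht.1, ht.2]
  positivity

/-- Positivity of all von Mises–Fisher eigenvalues: for `κ > 0`, `λ_ℓ(κ) > 0` for every
`ℓ = 0, 1, 2, …`. -/
theorem vmf_eigenvalues_pos (κ : ℝ) (hκ : 0 < κ) (ℓ : ℕ) :
    0 < vmfEigenvalue κ ℓ := by
  have hsinh : 0 < sinh κ := sinh_pos_iff.mpr hκ
  have hint := integral_exp_mul_one_sub_sq_pow_pos κ ℓ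
  rw [vmfEigenvalue, integral_exp_mul_legendreP]
  positivity
end
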